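/- arXiv:1505.00865 — 5 statements merged into one kernel-verified Lean document; each statement's English description precedes it below -/
import Mathlib

section
/- Let T > 0 and let f : (0,T) → ℝ be measurable. Define F(t) = ∫₀ᵗ f(τ)/τ dτ for 0 < t < T. Then (∫₀ᵀ |ln(t/(e·T))| · |F(t)|² dt/t)^{1/2} ≤ C · ∫₀ᵀ |ln(t/(e·T))| · |f(t)| dt/t for an absolute constant C. -/
open MeasureTheory Set
open scoped ENNReal

/-! With the weight `w t = |log (t / (e T))| = 1 + log (T / t) ≥ 1` on `(0, T]`, Cauchy–Schwarz
applied to the splitting `|f τ| / τ = √(w τ |f τ| / τ) · √(|f τ| / (τ w τ))` gives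
`|F t|² ≤ A · ∫₀ᵗ |f τ| / (τ w τ) dτ`, where `A = ∫₀ᵀ w |f| / τ` is the right-hand side.
Integrating against `w t / t` and swapping the order of integration leaves the tail integral
`∫_τ^T w t / t dt = (w τ ^ 2 - 1) / 2 ≤ w τ ^ 2 / 2`, which turns `|f τ| / (τ w τ)` back into
`w τ |f τ| / (2 τ)`. Hence the squared left-hand side is at most `A² / 2`, and `C = 1` works. -/

theorem lintegral_sq_le_mul_of_sq_le {α : Type*} [MeasurableSpace α] {μ : Measure α}
    {h g b : α → ℝ≥0∞} (hg : AEMeasurable g μ) (hb : AEMeasurable b μ)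
    (hhgb : ∀ᵐ x ∂μ, h x ^ 2 ≤ g x * b x) :
    (∫⁻ x, h x ∂μ) ^ 2 ≤ (∫⁻ x, g x ∂μ) * ∫⁻ x, b x ∂μ := by
  have h_sqrt_sq : ∀ c : ℝ≥0∞, (c ^ (2⁻¹ : ℝ)) ^ (2 : ℝ) = c := fun c => by
    rw [← ENNReal.rpow_mul]; norm_num
  have h_le : ∀ᵐ x ∂μ, h x ≤ g x ^ (2⁻¹ : ℝ) * b x ^ (2⁻¹ : ℝ) := by
    filter_upwards [hhgb] with x hx
    rw [← ENNReal.mul_rpow_of_nonneg _ _ (by norm_num), ← ENNReal.rpow_le_rpow_iff two_pos,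
      h_sqrt_sq, ENNReal.rpow_two]
    exact hx
  have holder := ENNReal.lintegral_mul_le_Lp_mul_Lq μ Real.HolderConjugate.two_two
    (hg.pow_const (2⁻¹ : ℝ)) (hb.pow_const (2⁻¹ : ℝ))
  simp only [Pi.mul_apply, h_sqrt_sq, one_div] at holder
  calc (∫⁻ x, h x ∂μ) ^ 2
      ≤ ((∫⁻ x, g x ∂μ) ^ (2⁻¹ : ℝ) * (∫⁻ x, b x ∂μ) ^ (2⁻¹ : ℝ)) ^ (2 : ℝ) := by
        rw [← ENNReal.rpow_two]
        gcongr
        exact (lintegral_mono_ae h_le).trans holder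
    _ = (∫⁻ x, g x ∂μ) * ∫⁻ x, b x ∂μ := by
        rw [ENNReal.mul_rpow_of_nonneg _ _ zero_le_two, h_sqrt_sq, h_sqrt_sq]

theorem integral_le_of_lintegral_ofReal_le {α : Type*} [MeasurableSpace α] {μ : Measure α}
    {φ : α → ℝ} {c : ℝ} (hφ : 0 ≤ᵐ[μ] φ) (hc : 0 ≤ c)
    (h : ∫⁻ x, ENNReal.ofReal (φ x) ∂μ ≤ ENNReal.ofReal c) : ∫ x, φ x ∂μ ≤ c := by
  by_cases hφi : Integrable φ μ
  · rwa [← ENNReal.ofReal_le_ofReal_iff hc, ofReal_integral_eq_lintegral_ofReal hφi hφ]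
  · rwa [integral_undef hφi]

section
variable {μ : Measure ℝ} {a T : ℝ}

theorem measurable_setLIntegral_Ioo_right (u : ℝ → ℝ≥0∞) :
    Measurable fun t => ∫⁻ τ in Ioo a t, u τ ∂μ :=
  Monotone.measurable fun _ _ hst => lintegral_mono_set (Ioo_subset_Ioo_right hst)

theorem setLIntegral_mul_setLIntegral_Ioo_comm [SFinite μ] {u b : ℝ → ℝ≥0∞}
    (hu : Measurable u) (hb : Measurable b) :
    ∫⁻ t in Ioo a T, u t * ∫⁻ τ in Ioo a t, b τ ∂μ ∂μ
      = ∫⁻ τ in Ioo a T, b τ * ∫⁻ t in Ioo τ T, u t ∂μ ∂μ := by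
  set K : ℝ × ℝ → ℝ≥0∞ := {p | p.2 < p.1}.indicator fun p => u p.1 * b p.2
  have hK : Measurable K :=
    ((hu.comp measurable_fst).mul (hb.comp measurable_snd)).indicator
      (measurableSet_lt measurable_snd measurable_fst)
  have h_left : ∀ t ∈ Ioo a T, u t * ∫⁻ τ in Ioo a t, b τ ∂μ = ∫⁻ τ in Ioo a T, K (t, τ) ∂μ := by
    intro t ht
    have hK_t : (fun τ => K (t, τ)) = (Iio t).indicator fun τ => u t * b τ := by
      ext τ; simp [K, indicator]
    rw [← lintegral_const_mul _ hb, hK_t, lintegral_indicator measurableSet_Iio,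
      Measure.restrict_restrict measurableSet_Iio, Iio_inter_Ioo, min_eq_left ht.2.le]
  have h_right : ∀ τ ∈ Ioo a T, b τ * ∫⁻ t in Ioo τ T, u t ∂μ = ∫⁻ t in Ioo a T, K (t, τ) ∂μ := by
    intro τ hτ
    have hK_τ : (fun t => K (t, τ)) = (Ioi τ).indicator fun t => u t * b τ := by
      ext t; simp [K, indicator]
    rw [hK_τ, lintegral_indicator measurableSet_Ioi, Measure.restrict_restrict measurableSet_Ioi,
      Ioi_inter_Ioo, max_eq_left hτ.1.le, lintegral_mul_const _ hu, mul_comm]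
  rw [setLIntegral_congr_fun measurableSet_Ioo h_left,
    setLIntegral_congr_fun measurableSet_Ioo h_right]
  exact lintegral_lintegral_swap hK.aemeasurable

theorem setLIntegral_mul_sq_setLIntegral_Ioo_le [SFinite μ] {u h g b : ℝ → ℝ≥0∞}
    (hu : Measurable u) (hg : Measurable g) (hb : Measurable b)
    (hhgb : ∀ τ ∈ Ioo a T, h τ ^ 2 ≤ g τ * b τ) :
    ∫⁻ t in Ioo a T, u t * (∫⁻ τ in Ioo a t, h τ ∂μ) ^ 2 ∂μ
      ≤ (∫⁻ τ in Ioo a T, g τ ∂μ) * ∫⁻ τ in Ioo a T, b τ * ∫⁻ t in Ioo τ T, u t ∂μ ∂μ := by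
  set G := ∫⁻ τ in Ioo a T, g τ ∂μ
  have h_sq : ∀ t ∈ Ioo a T, (∫⁻ τ in Ioo a t, h τ ∂μ) ^ 2 ≤ G * ∫⁻ τ in Ioo a t, b τ ∂μ := by
    intro t ht
    have h_sub : Ioo a t ⊆ Ioo a T := Ioo_subset_Ioo_right ht.2.le
    calc (∫⁻ τ in Ioo a t, h τ ∂μ) ^ 2
        ≤ (∫⁻ τ in Ioo a t, g τ ∂μ) * ∫⁻ τ in Ioo a t, b τ ∂μ :=
          lintegral_sq_le_mul_of_sq_le hg.aemeasurable hb.aemeasurable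
            (ae_restrict_of_forall_mem measurableSet_Ioo fun τ hτ => hhgb τ (h_sub hτ))
      _ ≤ G * ∫⁻ τ in Ioo a t, b τ ∂μ := by gcongr; exact lintegral_mono_set h_sub
  calc ∫⁻ t in Ioo a T, u t * (∫⁻ τ in Ioo a t, h τ ∂μ) ^ 2 ∂μ
      ≤ ∫⁻ t in Ioo a T, G * (u t * ∫⁻ τ in Ioo a t, b τ ∂μ) ∂μ :=
        setLIntegral_mono' measurableSet_Ioo fun t ht => by
          rw [mul_left_comm]; gcongr; exact h_sq t ht
    _ = G * ∫⁻ τ in Ioo a T, b τ * ∫⁻ t in Ioo τ T, u t ∂μ ∂μ := by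
        have hm : Measurable fun t => u t * ∫⁻ τ in Ioo a t, b τ ∂μ :=
          hu.mul (measurable_setLIntegral_Ioo_right b)
        rw [lintegral_const_mul G hm,
          setLIntegral_mul_setLIntegral_Ioo_comm hu hb]

end

theorem enorm_div_sq_eq_ofReal_mul_ofReal {τ w : ℝ} (hτ : 0 < τ) (hw : 0 < w) (x : ℝ) :
    ‖x / τ‖ₑ ^ 2 = ENNReal.ofReal (w * |x| / τ) * ENNReal.ofReal (|x| / (τ * w)) := by
  rw [Real.enorm_eq_ofReal_abs, ← ENNReal.ofReal_pow (abs_nonneg _),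
    ← ENNReal.ofReal_mul (by positivity), abs_div, abs_of_pos hτ]
  congr 1
  field_simp

section
open Real

noncomputable def logWeight (T t : ℝ) : ℝ := |log (t / (exp 1 * T))|

variable {t τ T : ℝ}

theorem logWeight_eq (ht : 0 < t) (htT : t ≤ T) : logWeight T t = 1 + log T - log t := by
  have hT : 0 < T := ht.trans_le htT
  rw [logWeight, log_div ht.ne' (by positivity), log_mul (exp_ne_zero 1) hT.ne', log_exp,
    abs_of_nonpos (by linarith [log_le_log ht htT])]
  ring

theorem one_le_logWeight (ht : 0 < t) (htT : t ≤ T) : 1 ≤ logWeight T t := by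
  rw [logWeight_eq ht htT]
  linarith [log_le_log ht htT]

@[fun_prop]
theorem measurable_logWeight : Measurable (logWeight T) := by
  unfold logWeight
  fun_prop

theorem continuousOn_one_add_log_sub_log_div :
    ContinuousOn (fun t => (1 + log T - log t) / t) (Ioi 0) :=
  (continuousOn_const.sub (continuousOn_log.mono fun _ ht => (ne_of_lt ht).symm)).div
    continuousOn_id fun _ ht => (ne_of_lt ht).symm

theorem integral_one_add_log_sub_log_div (hτ : 0 < τ) (hτT : τ ≤ T) :
    ∫ t in τ..T, (1 + log T - log t) / t = ((1 + log T - log τ) ^ 2 - 1) / 2 := by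
  have h_cont : ContinuousOn (fun t => (1 + log T - log t) / t) (uIcc τ T) :=
    continuousOn_one_add_log_sub_log_div.mono fun t ht =>
      hτ.trans_le (uIcc_of_le hτT ▸ ht).1
  have h_deriv : ∀ t ∈ uIcc τ T,
      HasDerivAt (fun t => -(1 + log T - log t) ^ 2 / 2) ((1 + log T - log t) / t) t := by
    intro t ht
    rw [uIcc_of_le hτT] at ht
    have ht0 : 0 < t := hτ.trans_le ht.1
    refine ((((hasDerivAt_log ht0.ne').const_sub (1 + log T)).pow 2).neg.div_const 2).congr_deriv ?_
    norm_num
    field_simp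
  rw [intervalIntegral.integral_eq_sub_of_hasDerivAt h_deriv (h_cont.intervalIntegrable)]
  ring

theorem setLIntegral_Ioo_ofReal_logWeight_div_le (hτ : 0 < τ) (hτT : τ ≤ T) :
    ∫⁻ t in Ioo τ T, ENNReal.ofReal (logWeight T t / t)
      ≤ ENNReal.ofReal (logWeight T τ ^ 2 / 2) := by
  have h_eq : ∀ t ∈ Ioo τ T, logWeight T t / t = (1 + log T - log t) / t :=
    fun t ht => by rw [logWeight_eq (hτ.trans ht.1) ht.2.le]
  have h_nonneg : ∀ t ∈ Ioo τ T, 0 ≤ (1 + log T - log t) / t := fun t ht => by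
    rw [← h_eq t ht]; exact div_nonneg (abs_nonneg _) (hτ.trans ht.1).le
  have h_int : IntegrableOn (fun t => (1 + log T - log t) / t) (Ioo τ T) :=
    (continuousOn_one_add_log_sub_log_div.mono fun t ht => hτ.trans_le ht.1).integrableOn_Icc
      |>.mono_set Ioo_subset_Icc_self
  rw [setLIntegral_congr_fun measurableSet_Ioo fun t ht => by rw [h_eq t ht],
    ← ofReal_integral_eq_lintegral_ofReal h_int
      (ae_restrict_of_forall_mem measurableSet_Ioo h_nonneg),
    ← integral_Ioc_eq_integral_Ioo, ← intervalIntegral.integral_of_le hτT,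
    integral_one_add_log_sub_log_div hτ hτT, logWeight_eq hτ hτT]
  gcongr
  linarith

theorem ofReal_div_mul_setLIntegral_logWeight_le {x : ℝ} (hτ : 0 < τ) (hτT : τ ≤ T) :
    ENNReal.ofReal (|x| / (τ * logWeight T τ)) * ∫⁻ t in Ioo τ T, ENNReal.ofReal (logWeight T t / t)
      ≤ ENNReal.ofReal (logWeight T τ * |x| / τ) := by
  have hw : 0 < logWeight T τ := zero_lt_one.trans_le (one_le_logWeight hτ hτT)
  calc _ ≤ ENNReal.ofReal (|x| / (τ * logWeight T τ)) * ENNReal.ofReal (logWeight T τ ^ 2 / 2) := by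
        gcongr; exact setLIntegral_Ioo_ofReal_logWeight_div_le hτ hτT
    _ = ENNReal.ofReal (logWeight T τ * |x| / τ / 2) := by
        rw [← ENNReal.ofReal_mul (by positivity)]
        congr 1
        field_simp
    _ ≤ ENNReal.ofReal (logWeight T τ * |x| / τ) :=
        ENNReal.ofReal_le_ofReal (half_le_self (by positivity))

theorem lintegral_logWeight_mul_sq_le {f : ℝ → ℝ} (hf : Measurable f)
    (hInt : IntegrableOn (fun t => logWeight T t * |f t| / t) (Ioo 0 T)) :
    ∫⁻ t in Ioo 0 T, ENNReal.ofReal (logWeight T t * |∫ τ in Ioo 0 t, f τ / τ| ^ 2 / t)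
      ≤ ENNReal.ofReal (∫ t in Ioo 0 T, logWeight T t * |f t| / t) ^ 2 := by
  set A := ∫ t in Ioo 0 T, logWeight T t * |f t| / t
  have hw_pos : ∀ t ∈ Ioo 0 T, 0 < logWeight T t := fun t ht =>
    zero_lt_one.trans_le (one_le_logWeight ht.1 ht.2.le)
  have hA : ∫⁻ τ in Ioo 0 T, ENNReal.ofReal (logWeight T τ * |f τ| / τ) = ENNReal.ofReal A :=
    (ofReal_integral_eq_lintegral_ofReal hInt (ae_restrict_of_forall_mem measurableSet_Ioo
      fun t ht => (div_nonneg (mul_nonneg (hw_pos t ht).le (abs_nonneg _)) ht.1.le))).symm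
  calc ∫⁻ t in Ioo 0 T, ENNReal.ofReal (logWeight T t * |∫ τ in Ioo 0 t, f τ / τ| ^ 2 / t)
      ≤ ∫⁻ t in Ioo 0 T, ENNReal.ofReal (logWeight T t / t)
          * (∫⁻ τ in Ioo 0 t, ‖f τ / τ‖ₑ) ^ 2 := by
        refine setLIntegral_mono' measurableSet_Ioo fun t ht => ?_
        rw [mul_div_right_comm, ENNReal.ofReal_mul (div_nonneg (hw_pos t ht).le ht.1.le),
          ENNReal.ofReal_pow (abs_nonneg _), ← Real.enorm_eq_ofReal_abs]
        gcongr
        exact enorm_integral_le_lintegral_enorm _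
    _ ≤ ENNReal.ofReal A * ∫⁻ τ in Ioo 0 T, ENNReal.ofReal (|f τ| / (τ * logWeight T τ))
          * ∫⁻ t in Ioo τ T, ENNReal.ofReal (logWeight T t / t) := by
        rw [← hA]
        exact setLIntegral_mul_sq_setLIntegral_Ioo_le (by fun_prop) (by fun_prop) (by fun_prop)
          fun τ hτ => enorm_div_sq_eq_ofReal_mul_ofReal hτ.1 (hw_pos τ hτ) (f τ) |>.le
    _ ≤ ENNReal.ofReal A ^ 2 := by
        rw [sq]
        gcongr
        rw [← hA]
        exact setLIntegral_mono' measurableSet_Ioo fun τ hτ =>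
          ofReal_div_mul_setLIntegral_logWeight_le hτ.1 hτ.2.le

end

theorem stmt_0 :
    ∃ C : ℝ, 0 < C ∧ ∀ (T : ℝ), 0 < T → ∀ f : ℝ → ℝ, Measurable f →
      IntegrableOn (fun t => |Real.log (t / (Real.exp 1 * T))| * |f t| / t) (Ioo 0 T) →
      (∫ t in Ioo 0 T,
          |Real.log (t / (Real.exp 1 * T))| * |∫ τ in Ioo 0 t, f τ / τ| ^ 2 / t) ^ ((1 : ℝ) / 2)
        ≤ C * ∫ t in Ioo 0 T, |Real.log (t / (Real.exp 1 * T))| * |f t| / t := by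
  refine ⟨1, one_pos, fun T _ f hf hInt => ?_⟩
  set A := ∫ t in Ioo 0 T, |Real.log (t / (Real.exp 1 * T))| * |f t| / t
  have hA : 0 ≤ A := setIntegral_nonneg measurableSet_Ioo fun t ht =>
    div_nonneg (by positivity) ht.1.le
  have h_sq : ∫ t in Ioo 0 T,
      |Real.log (t / (Real.exp 1 * T))| * |∫ τ in Ioo 0 t, f τ / τ| ^ 2 / t ≤ A ^ 2 := by
    refine integral_le_of_lintegral_ofReal_le
      (ae_restrict_of_forall_mem measurableSet_Ioo fun t ht => ?_) (sq_nonneg A) ?_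
    · have := ht.1
      positivity
    · rw [ENNReal.ofReal_pow hA]
      exact lintegral_logWeight_mul_sq_le hf hInt
  rw [one_mul, ← Real.sqrt_eq_rpow, ← Real.sqrt_sq hA]
  exact Real.sqrt_le_sqrt h_sq
end

section
/- Let T > 0 and let f : (0,T) → ℝ be measurable. Define F(t) = ∫₀ᵗ f(τ)/τ dτ for 0 < t < T. Then sup_{0<t<T} |ln(t/(e·T))| · |F(t)| ≤ C · sup_{0<t<T} |ln(t/(e·T))|² · |f(t)| for an absolute constant C. -/
/-!
With `c = e T > T`, the weight `τ ↦ (τ log² (τ / c))⁻¹` has the primitive `-(log (τ / c))⁻¹`,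
which tends to `0` as `τ → 0⁺`. So if `S` bounds `log² (τ / c) |f τ|` almost everywhere, then
`|∫₀ᵗ f τ / τ dτ| ≤ S ∫₀ᵗ (τ log² (τ / c))⁻¹ dτ = S / |log (t / c)|`, and the theorem holds with `C = 1`.
-/

open MeasureTheory Set Filter Real

lemma Real.continuousAt_inv_log_zero : ContinuousAt (fun x => (log x)⁻¹) 0 := by
  rw [← continuousWithinAt_compl_self, ContinuousWithinAt, log_zero, inv_zero]
  exact tendsto_inv_atBot_zero.comp tendsto_log_nhdsNE_zero

lemma log_div_neg {τ c : ℝ} (hτ : 0 < τ) (hτc : τ < c) : log (τ / c) < 0 :=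
  log_neg (div_pos hτ (hτ.trans hτc)) ((div_lt_one (hτ.trans hτc)).2 hτc)

lemma hasDerivAt_neg_inv_log_div {c τ : ℝ} (hτ : τ ≠ 0) (hc : c ≠ 0) (hlog : log (τ / c) ≠ 0) :
    HasDerivAt (fun x => -(log (x / c))⁻¹) (τ * log (τ / c) ^ 2)⁻¹ τ := by
  refine ((((hasDerivAt_id τ).div_const c).log (div_ne_zero hτ hc)).inv hlog).neg.congr_deriv ?_
  simp only [id]
  field_simp

-- At `0` this relies on the junk value `log 0 = 0`, which matches the limit of `(log x)⁻¹`.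
lemma continuousOn_neg_inv_log_div {c t : ℝ} (htc : t < c) :
    ContinuousOn (fun x => -(log (x / c))⁻¹) (Icc 0 t) := by
  intro τ hτ
  rcases hτ.1.eq_or_lt with rfl | hτ0
  · exact (continuousAt_inv_log_zero.comp_of_eq (continuous_id.div_const c).continuousAt
      (zero_div c)).neg.continuousWithinAt
  · exact ((continuousAt_id.div_const c).log (div_pos hτ0 (hτ0.trans_le hτ.2 |>.trans htc)).ne'
      |>.inv₀ (log_div_neg hτ0 (hτ.2.trans_lt htc)).ne).neg.continuousWithinAt

lemma hasDerivAt_neg_inv_log_div_of_mem_Ioo {c t τ : ℝ} (htc : t < c) (hτ : τ ∈ Ioo 0 t) :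
    HasDerivAt (fun x => -(log (x / c))⁻¹) (τ * log (τ / c) ^ 2)⁻¹ τ :=
  hasDerivAt_neg_inv_log_div hτ.1.ne' (hτ.1.trans (hτ.2.trans htc)).ne'
    (log_div_neg hτ.1 (hτ.2.trans htc)).ne

lemma integrableOn_inv_mul_log_div_sq {c t : ℝ} (htc : t < c) :
    IntegrableOn (fun τ => (τ * log (τ / c) ^ 2)⁻¹) (Ioc 0 t) :=
  intervalIntegral.integrableOn_deriv_of_nonneg (continuousOn_neg_inv_log_div htc)
    (fun _ => hasDerivAt_neg_inv_log_div_of_mem_Ioo htc) fun τ hτ => by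
      have := hτ.1
      positivity

lemma integral_inv_mul_log_div_sq {c t : ℝ} (ht : 0 < t) (htc : t < c) :
    ∫ τ in Ioo 0 t, (τ * log (τ / c) ^ 2)⁻¹ = |log (t / c)|⁻¹ := by
  rw [← integral_Ioc_eq_integral_Ioo, ← intervalIntegral.integral_of_le ht.le,
    intervalIntegral.integral_eq_sub_of_hasDerivAt_of_le ht.le (continuousOn_neg_inv_log_div htc)
      (fun _ => hasDerivAt_neg_inv_log_div_of_mem_Ioo htc)
      ((intervalIntegrable_iff_integrableOn_Ioc_of_le ht.le).2 (integrableOn_inv_mul_log_div_sq htc)),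
    abs_of_neg (log_div_neg ht htc)]
  simp

lemma abs_log_div_mul_abs_integral_div_le {c t S : ℝ} {f : ℝ → ℝ} (ht : 0 < t) (htc : t < c)
    (hbound : ∀ᵐ τ ∂(volume.restrict (Ioo 0 t)), |log (τ / c)| ^ 2 * |f τ| ≤ S) :
    |log (t / c)| * |∫ τ in Ioo 0 t, f τ / τ| ≤ S := by
  have hdom : ∀ᵐ τ ∂(volume.restrict (Ioo 0 t)), ‖f τ / τ‖ ≤ S * (τ * log (τ / c) ^ 2)⁻¹ := by
    filter_upwards [hbound, ae_restrict_mem measurableSet_Ioo] with τ hτ hτt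
    have hlog := (log_div_neg hτt.1 (hτt.2.trans htc)).ne
    rw [sq_abs] at hτ
    rw [norm_div, norm_of_nonneg hτt.1.le, ← div_eq_mul_inv,
      div_le_div_iff₀ hτt.1 (mul_pos hτt.1 (pow_two_pos_of_ne_zero hlog))]
    simpa [mul_comm, mul_left_comm] using mul_le_mul_of_nonneg_left hτ hτt.1.le
  have hint : |∫ τ in Ioo 0 t, f τ / τ| ≤ S * |log (t / c)|⁻¹ := by
    have := norm_integral_le_of_norm_le
      (((integrableOn_inv_mul_log_div_sq htc).mono_set Ioo_subset_Ioc_self).const_mul S) hdom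
    rwa [integral_const_mul, integral_inv_mul_log_div_sq ht htc] at this
  have hlog := (log_div_neg ht htc).ne
  calc |log (t / c)| * |∫ τ in Ioo 0 t, f τ / τ|
      ≤ |log (t / c)| * (S * |log (t / c)|⁻¹) := by gcongr
    _ = S := by field_simp

theorem stmt_1 :
    ∃ C : ℝ, 0 < C ∧ ∀ (T : ℝ), 0 < T → ∀ f : ℝ → ℝ, Measurable f →
      (∃ M : ℝ, ∀ᵐ t ∂(volume.restrict (Ioo 0 T)),
        |Real.log (t / (Real.exp 1 * T))| ^ 2 * |f t| ≤ M) →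
      essSup (fun t => |Real.log (t / (Real.exp 1 * T))| * |∫ τ in Ioo 0 t, f τ / τ|)
          (volume.restrict (Ioo 0 T))
        ≤ C * essSup (fun t => |Real.log (t / (Real.exp 1 * T))| ^ 2 * |f t|)
          (volume.restrict (Ioo 0 T)) := by
  refine ⟨1, one_pos, fun T hT f _ ⟨M, hM⟩ => ?_⟩
  have hTc : T < exp 1 * T := lt_mul_of_one_lt_left hT (one_lt_exp_iff.2 one_pos)
  have : (ae (volume.restrict (Ioo 0 T))).NeBot := ae_restrict_neBot.2 (by simp [hT])
  rw [one_mul]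
  refine essSup_le_of_ae_le _ ?_ (isCoboundedUnder_le_of_eventually_le _ (x := 0)
    (Eventually.of_forall fun _ => by positivity))
  filter_upwards [ae_restrict_mem measurableSet_Ioo] with t ht
  exact abs_log_div_mul_abs_integral_div_le ht.1 (ht.2.trans hTc)
    (ae_restrict_of_ae_restrict_of_subset (Ioo_subset_Ioo_right ht.2.le) (ae_le_essSup ⟨M, hM⟩))
end

section
/- Let T > 0 and let f : (0,T) → ℝ be measurable. Define F(t) = ∫₀ᵗ |ln(τ/(e·T))|^{-1} f(τ)/τ dτ for 0 < t < T. Then sup_{0<t<T} |ln(t/(e·T))| · |F(t)| ≤ sup_{0<t<T} |ln(t/(e·T))| · |f(t)|. -/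
/-!
Let `S` be the right-hand side and `c = e·T`, so that `|ln(τ/c)| = ln c - ln τ > 0` on `(0, T)` and
`|f τ| ≤ S / (ln c - ln τ)` almost everywhere. Then
`|F t| ≤ S ∫₀ᵗ (ln c - ln τ)⁻² dτ/τ = S / (ln c - ln t)`, the integral being evaluated by the
fundamental theorem of calculus: `(ln c - ln τ)⁻¹` is a primitive of the integrand and tends to `0`
as `τ → 0⁺`.
-/

open MeasureTheory Set Filter Topology Real

theorem integrableOn_Ioc_and_integral_eq_of_hasDerivAt_of_tendsto {g g' : ℝ → ℝ} {a b ga : ℝ}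
    (hab : a < b) (hderiv : ∀ x ∈ Ioc a b, HasDerivAt g (g' x) x)
    (hpos : ∀ x ∈ Ioo a b, 0 ≤ g' x) (ha : Tendsto g (𝓝[>] a) (𝓝 ga)) :
    IntegrableOn g' (Ioc a b) ∧ ∫ x in Ioc a b, g' x = g b - ga := by
  classical
  set G := Function.update g a ga
  have hG : ∀ x ∈ Ioo a b, HasDerivAt G (g' x) x := fun x hx =>
    (hderiv x (Ioo_subset_Ioc_self hx)).congr_of_eventuallyEq <| by
      filter_upwards [Ioi_mem_nhds hx.1] with y hy using Function.update_of_ne hy.ne' _ _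
  have hcont : ContinuousOn G (Icc a b) := by
    rw [continuousOn_update_iff, Icc_sdiff_left]
    exact ⟨fun x hx => (hderiv x hx).continuousAt.continuousWithinAt,
      fun _ => ha.mono_left (nhdsWithin_mono _ Ioc_subset_Ioi_self)⟩
  have hint := intervalIntegral.integrableOn_deriv_of_nonneg hcont hG hpos
  refine ⟨hint, ?_⟩
  rw [← intervalIntegral.integral_of_le hab.le, intervalIntegral.integral_eq_sub_of_hasDerivAt_of_le
    hab.le hcont hG ((intervalIntegrable_iff_integrableOn_Ioc_of_le hab.le).2 hint)]
  simp [G, hab.ne']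

theorem abs_log_div_of_lt {τ c : ℝ} (hτ : 0 < τ) (hτc : τ < c) :
    |log (τ / c)| = log c - log τ := by
  rw [log_div hτ.ne' (hτ.trans hτc).ne', abs_of_neg (by linarith [log_lt_log hτ hτc])]
  ring

theorem hasDerivAt_inv_log_sub_log {c x : ℝ} (hx : 0 < x) (hxc : x < c) :
    HasDerivAt (fun τ => (log c - log τ)⁻¹) (((log c - log x) ^ 2)⁻¹ / x) x := by
  have hne : log c - log x ≠ 0 := by linarith [log_lt_log hx hxc]
  exact (((hasDerivAt_log hx.ne').const_sub (log c)).inv hne).congr_deriv (by ring)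

theorem tendsto_inv_log_sub_log_nhdsGT_zero (c : ℝ) :
    Tendsto (fun τ => (log c - log τ)⁻¹) (𝓝[>] 0) (𝓝 0) :=
  (tendsto_atTop_add_const_left _ (log c)
    (tendsto_neg_atBot_atTop.comp tendsto_log_nhdsGT_zero)).inv_tendsto_atTop

theorem integrableOn_and_integral_inv_sq_log_sub_log {c t : ℝ} (ht : 0 < t) (htc : t < c) :
    IntegrableOn (fun τ => ((log c - log τ) ^ 2)⁻¹ / τ) (Ioo 0 t) ∧
      ∫ τ in Ioo 0 t, ((log c - log τ) ^ 2)⁻¹ / τ = (log c - log t)⁻¹ := by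
  have hderiv : ∀ x ∈ Ioc 0 t, HasDerivAt (fun τ => (log c - log τ)⁻¹)
      (((log c - log x) ^ 2)⁻¹ / x) x := fun x hx =>
    hasDerivAt_inv_log_sub_log hx.1 (hx.2.trans_lt htc)
  have hpos : ∀ x ∈ Ioo 0 t, 0 ≤ ((log c - log x) ^ 2)⁻¹ / x := fun x hx => by
    have := hx.1; positivity
  obtain ⟨hint, hval⟩ := integrableOn_Ioc_and_integral_eq_of_hasDerivAt_of_tendsto ht hderiv hpos
    (tendsto_inv_log_sub_log_nhdsGT_zero c)
  exact ⟨hint.mono_set Ioo_subset_Ioc_self, by rw [← integral_Ioc_eq_integral_Ioo, hval, sub_zero]⟩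

theorem abs_log_div_mul_abs_integral_le {c t S : ℝ} {f : ℝ → ℝ} (ht : 0 < t) (htc : t < c)
    (hf : ∀ᵐ τ ∂(volume.restrict (Ioo 0 t)), |log (τ / c)| * |f τ| ≤ S) :
    |log (t / c)| * |∫ τ in Ioo 0 t, |log (τ / c)|⁻¹ * f τ / τ| ≤ S := by
  obtain ⟨hint, hval⟩ := integrableOn_and_integral_inv_sq_log_sub_log ht htc
  have hbound : ∀ᵐ τ ∂(volume.restrict (Ioo 0 t)),
      ‖|log (τ / c)|⁻¹ * f τ / τ‖ ≤ S * (((log c - log τ) ^ 2)⁻¹ / τ) := by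
    filter_upwards [hf, ae_restrict_mem measurableSet_Ioo] with τ hfτ ⟨hτ, hτt⟩
    have hτc := hτt.trans htc
    have hl : 0 < log c - log τ := by linarith [log_lt_log hτ hτc]
    rw [abs_log_div_of_lt hτ hτc, mul_comm, ← le_div_iff₀ hl] at hfτ
    rw [norm_div, norm_mul, norm_inv, Real.norm_eq_abs, Real.norm_eq_abs, Real.norm_eq_abs,
      abs_abs, abs_of_pos hτ, abs_log_div_of_lt hτ hτc]
    calc (log c - log τ)⁻¹ * |f τ| / τ ≤ (log c - log τ)⁻¹ * (S / (log c - log τ)) / τ := by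
          gcongr
      _ = S * (((log c - log τ) ^ 2)⁻¹ / τ) := by rw [sq, mul_inv]; ring
  have hle : |∫ τ in Ioo 0 t, |log (τ / c)|⁻¹ * f τ / τ| ≤ S * (log c - log t)⁻¹ :=
    calc |∫ τ in Ioo 0 t, |log (τ / c)|⁻¹ * f τ / τ|
        ≤ ∫ τ in Ioo 0 t, S * (((log c - log τ) ^ 2)⁻¹ / τ) :=
          norm_integral_le_of_norm_le (hint.const_mul S) hbound
      _ = S * (log c - log t)⁻¹ := by rw [integral_const_mul, hval]
  have hl : 0 < log c - log t := by linarith [log_lt_log ht htc]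
  calc |log (t / c)| * |∫ τ in Ioo 0 t, |log (τ / c)|⁻¹ * f τ / τ|
      ≤ (log c - log t) * (S * (log c - log t)⁻¹) := by
        rw [abs_log_div_of_lt ht htc]; gcongr
    _ = S := by field_simp

theorem stmt_5_general (T : ℝ) (hT : 0 < T) (f : ℝ → ℝ)
    (hbd : ∃ M : ℝ, ∀ᵐ t ∂(volume.restrict (Ioo 0 T)),
      |Real.log (t / (Real.exp 1 * T))| * |f t| ≤ M) :
    essSup (fun t => |Real.log (t / (Real.exp 1 * T))| *
        |∫ τ in Ioo 0 t, |Real.log (τ / (Real.exp 1 * T))|⁻¹ * f τ / τ|)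
        (volume.restrict (Ioo 0 T))
      ≤ essSup (fun t => |Real.log (t / (Real.exp 1 * T))| * |f t|)
        (volume.restrict (Ioo 0 T)) := by
  obtain ⟨M, hM⟩ := hbd
  have hTc : T < exp 1 * T := lt_mul_of_one_lt_left hT (one_lt_exp_iff.2 one_pos)
  have : (ae (volume.restrict (Ioo 0 T))).NeBot := ae_restrict_neBot.2 (by simp [hT])
  have hweighted : ∀ᵐ t ∂(volume.restrict (Ioo 0 T)), |log (t / (exp 1 * T))| * |f t| ≤
      essSup (fun t => |log (t / (exp 1 * T))| * |f t|) (volume.restrict (Ioo 0 T)) :=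
    ae_le_essSup ⟨M, hM⟩
  refine essSup_le_of_ae_le _ ?_ (isCoboundedUnder_le_of_le _ fun t => by positivity)
  filter_upwards [ae_restrict_mem measurableSet_Ioo] with t ht
  exact abs_log_div_mul_abs_integral_le ht.1 (ht.2.trans hTc)
    (ae_restrict_of_ae_restrict_of_subset (Ioo_subset_Ioo_right ht.2.le) hweighted)

theorem stmt_5 (T : ℝ) (hT : 0 < T) (f : ℝ → ℝ) (hf : Measurable f)
    (hbd : ∃ M : ℝ, ∀ᵐ t ∂(volume.restrict (Ioo 0 T)),
      |Real.log (t / (Real.exp 1 * T))| * |f t| ≤ M) :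
    essSup (fun t => |Real.log (t / (Real.exp 1 * T))| *
        |∫ τ in Ioo 0 t, |Real.log (τ / (Real.exp 1 * T))|⁻¹ * f τ / τ|)
        (volume.restrict (Ioo 0 T))
      ≤ essSup (fun t => |Real.log (t / (Real.exp 1 * T))| * |f t|)
        (volume.restrict (Ioo 0 T)) :=
  stmt_5_general T hT f hbd
end

section
/- Let T > 0 and let f, g : (0,T) → ℝ be measurable with M := sup_{0<τ<T} √τ·|f(τ)| < ∞. Define J(t) = ∫_{t/2}^t (t−τ)^{-1/2} |f(τ)| |g(τ)| dτ. Then for any σ ≥ 0, sup_{0<t<T} √t · |ln(t/(e·T))|^σ · J(t) ≤ C · M · sup_{0<τ<T} √τ · |ln(τ/(e·T))|^σ · |g(τ)| for an absolute constant C. -/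
/-!
Since `τ / (e T) ≤ 1/e` on `(0, T)` and `|log|` decreases on `(0, 1]`, the weight
`|log (τ / (e T))| ^ σ` is at least its value at `t` for `τ ≤ t`, while `τ ≥ t / 2`. Hence on
`(t/2, t)` we have `|f τ| |g τ| ≤ 2 M B / (t |log (t / (e T))| ^ σ)`, with `B` the weighted
supremum of `g`, and the kernel integrates to
`∫_{t/2}^t (t - τ)^{-1/2} dτ = 2 √(t/2)`, which gives the bound with `C = 2 √2`.
-/

open MeasureTheory Set Filter Real

lemma intervalIntegrable_sub_rpow_neg_half (a b t : ℝ) :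
    IntervalIntegrable (fun τ => (t - τ) ^ (-(1 : ℝ) / 2)) volume a b := by
  simpa using ((intervalIntegral.intervalIntegrable_rpow' (a := t - a) (b := t - b)
    (r := -(1 : ℝ) / 2) (by norm_num)).comp_sub_left t)

lemma integral_Ioo_sub_rpow_neg_half {a t : ℝ} (hat : a ≤ t) :
    ∫ τ in Ioo a t, (t - τ) ^ (-(1 : ℝ) / 2) = 2 * √(t - a) := by
  rw [← integral_Ioc_eq_integral_Ioo, ← intervalIntegral.integral_of_le hat,
    intervalIntegral.integral_comp_sub_left (fun x => x ^ (-(1 : ℝ) / 2)),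
    integral_rpow (Or.inl (by norm_num)), sub_self, sqrt_eq_rpow]
  norm_num
  ring

lemma setIntegral_sub_rpow_neg_half_mul_le {a t c : ℝ} {h : ℝ → ℝ} (hat : a ≤ t)
    (h_nonneg : 0 ≤ᵐ[volume.restrict (Ioo a t)] h)
    (h_le : ∀ᵐ τ ∂volume.restrict (Ioo a t), h τ ≤ c) :
    ∫ τ in Ioo a t, (t - τ) ^ (-(1 : ℝ) / 2) * h τ ≤ 2 * √(t - a) * c := by
  have hk : ∀ τ ∈ Ioo a t, 0 ≤ (t - τ) ^ (-(1 : ℝ) / 2) :=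
    fun τ hτ => rpow_nonneg (sub_nonneg.2 hτ.2.le) _
  calc ∫ τ in Ioo a t, (t - τ) ^ (-(1 : ℝ) / 2) * h τ
      ≤ ∫ τ in Ioo a t, (t - τ) ^ (-(1 : ℝ) / 2) * c := by
        refine integral_mono_of_nonneg ?_ ?_ ?_
        · filter_upwards [ae_restrict_mem measurableSet_Ioo, h_nonneg] with τ hτ hτ'
          exact mul_nonneg (hk τ hτ) hτ'
        · exact ((intervalIntegrable_sub_rpow_neg_half a t t).1.mono_set
            Ioo_subset_Ioc_self).mul_const c
        · filter_upwards [ae_restrict_mem measurableSet_Ioo, h_le] with τ hτ hτ'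
          exact mul_le_mul_of_nonneg_left hτ' (hk τ hτ)
    _ = 2 * √(t - a) * c := by rw [integral_mul_const, integral_Ioo_sub_rpow_neg_half hat]

lemma abs_log_le_abs_log_of_le_one {x y : ℝ} (hx : 0 < x) (hxy : x ≤ y) (hy : y ≤ 1) :
    |log y| ≤ |log x| := by
  rw [abs_of_nonpos (log_nonpos (hx.le.trans hxy) hy),
    abs_of_nonpos (log_nonpos hx.le (hxy.trans hy))]
  exact neg_le_neg (log_le_log hx hxy)

lemma one_le_abs_log_div_exp_mul {t T : ℝ} (ht : 0 < t) (htT : t ≤ T) :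
    1 ≤ |log (t / (exp 1 * T))| := by
  have hT : 0 < T := ht.trans_le htT
  have : log (t / (exp 1 * T)) ≤ -1 := by
    rw [log_div ht.ne' (mul_pos (exp_pos 1) hT).ne', log_mul (exp_pos 1).ne' hT.ne', log_exp]
    linarith [log_le_log ht htT]
  rw [abs_of_neg (by linarith)]
  linarith

lemma mul_abs_log_rpow_mul_le {T σ t τ a b A B : ℝ} (hσ : 0 ≤ σ) (hτ : 0 < τ) (htτ : t ≤ 2 * τ)
    (hτt : τ ≤ t) (htT : t ≤ T) (ha : √τ * |a| ≤ A)
    (hb : √τ * |log (τ / (exp 1 * T))| ^ σ * |b| ≤ B) :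
    t * |log (t / (exp 1 * T))| ^ σ * (|a| * |b|) ≤ 2 * A * B := by
  have hT : 0 < T := hτ.trans_le (hτt.trans htT)
  have hlog : |log (t / (exp 1 * T))| ^ σ ≤ |log (τ / (exp 1 * T))| ^ σ := by
    refine rpow_le_rpow (abs_nonneg _) (abs_log_le_abs_log_of_le_one (by positivity)
      (by gcongr) ?_) hσ
    rw [div_le_one (by positivity)]
    nlinarith [add_one_le_exp (1 : ℝ)]
  calc t * |log (t / (exp 1 * T))| ^ σ * (|a| * |b|)
      ≤ (2 * τ) * |log (τ / (exp 1 * T))| ^ σ * (|a| * |b|) := by gcongr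
    _ = 2 * ((√τ * |a|) * (√τ * |log (τ / (exp 1 * T))| ^ σ * |b|)) := by
        linear_combination (-2 * |log (τ / (exp 1 * T))| ^ σ * (|a| * |b|)) * mul_self_sqrt hτ.le
    _ ≤ 2 * A * B := by
        have := mul_le_mul ha hb (by positivity) ((by positivity : 0 ≤ √τ * |a|).trans ha)
        linarith

lemma sqrt_mul_abs_log_rpow_mul_integral_le {T σ A B t : ℝ} {f g : ℝ → ℝ} (hσ : 0 ≤ σ)
    (hf : ∀ᵐ τ ∂volume.restrict (Ioo 0 T), √τ * |f τ| ≤ A)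
    (hg : ∀ᵐ τ ∂volume.restrict (Ioo 0 T), √τ * |log (τ / (exp 1 * T))| ^ σ * |g τ| ≤ B)
    (ht : t ∈ Ioo 0 T) :
    √t * |log (t / (exp 1 * T))| ^ σ *
        ∫ τ in Ioo (t / 2) t, (t - τ) ^ (-(1 : ℝ) / 2) * |f τ| * |g τ|
      ≤ 2 * √2 * A * B := by
  obtain ⟨ht0, htT⟩ := ht
  set L := |log (t / (exp 1 * T))| ^ σ
  have hL : 0 < L := one_pos.trans_le (one_le_rpow (one_le_abs_log_div_exp_mul ht0 htT.le) hσ)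
  have hsub : Ioo (t / 2) t ⊆ Ioo 0 T := Ioo_subset_Ioo (by linarith) htT.le
  have hfg : ∀ᵐ τ ∂volume.restrict (Ioo (t / 2) t), |f τ| * |g τ| ≤ 2 * A * B / (t * L) := by
    filter_upwards [ae_restrict_mem measurableSet_Ioo, ae_restrict_of_ae_restrict_of_subset hsub hf,
      ae_restrict_of_ae_restrict_of_subset hsub hg] with τ hτ hfτ hgτ
    rw [le_div_iff₀' (by positivity)]
    exact mul_abs_log_rpow_mul_le hσ (by linarith [hτ.1]) (by linarith [hτ.1]) hτ.2.le htT.le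
      hfτ hgτ
  calc √t * L * ∫ τ in Ioo (t / 2) t, (t - τ) ^ (-(1 : ℝ) / 2) * |f τ| * |g τ|
      = √t * L * ∫ τ in Ioo (t / 2) t, (t - τ) ^ (-(1 : ℝ) / 2) * (|f τ| * |g τ|) := by
        simp only [mul_assoc]
    _ ≤ √t * L * (2 * √(t - t / 2) * (2 * A * B / (t * L))) := by
        gcongr
        exact setIntegral_sub_rpow_neg_half_mul_le (by linarith)
          (ae_of_all _ fun τ => by positivity) hfg
    _ = 2 * √2 * A * B := by
        rw [show t - t / 2 = t / 2 by ring, sqrt_div' _ (by norm_num : (0:ℝ) ≤ 2)]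
        field_simp
        rw [sq_sqrt ht0.le, sq_sqrt zero_le_two]
        ring

theorem stmt_10 :
    ∃ C : ℝ, 0 < C ∧ ∀ T : ℝ, 0 < T → ∀ σ : ℝ, 0 ≤ σ → ∀ f g : ℝ → ℝ,
      Measurable f → Measurable g →
      (∃ M : ℝ, ∀ᵐ τ ∂(volume.restrict (Ioo 0 T)), Real.sqrt τ * |f τ| ≤ M) →
      (∃ M : ℝ, ∀ᵐ τ ∂(volume.restrict (Ioo 0 T)),
        Real.sqrt τ * |Real.log (τ / (Real.exp 1 * T))| ^ σ * |g τ| ≤ M) →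
      essSup (fun t => Real.sqrt t * |Real.log (t / (Real.exp 1 * T))| ^ σ *
          ∫ τ in Ioo (t / 2) t, (t - τ) ^ (-(1 : ℝ) / 2) * |f τ| * |g τ|)
          (volume.restrict (Ioo 0 T))
        ≤ C * essSup (fun τ => Real.sqrt τ * |f τ|) (volume.restrict (Ioo 0 T)) *
            essSup (fun τ => Real.sqrt τ * |Real.log (τ / (Real.exp 1 * T))| ^ σ * |g τ|)
              (volume.restrict (Ioo 0 T)) := by
  refine ⟨2 * √2, by positivity, fun T hT σ hσ f g _ _ ⟨Mf, hMf⟩ ⟨Mg, hMg⟩ => ?_⟩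
  have : NeZero (volume (Ioo (0 : ℝ) T)) := ⟨(Measure.measure_Ioo_pos _ |>.2 hT).ne'⟩
  refine essSup_le_of_ae_le _ ?_ (isCoboundedUnder_le_of_le _ (x := 0) fun t => ?_)
  · filter_upwards [ae_restrict_mem measurableSet_Ioo] with t ht
    exact sqrt_mul_abs_log_rpow_mul_integral_le hσ (ae_le_essSup ⟨Mf, hMf⟩)
      (ae_le_essSup ⟨Mg, hMg⟩) ht
  · have hJ : 0 ≤ ∫ τ in Ioo (t / 2) t, (t - τ) ^ (-(1 : ℝ) / 2) * |f τ| * |g τ| :=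
      setIntegral_nonneg measurableSet_Ioo fun τ hτ => by
        have := rpow_nonneg (sub_nonneg.2 hτ.2.le) (-(1 : ℝ) / 2)
        positivity
    positivity
end

section
/- Let T > 0, σ > 1, q ∈ [1,∞], and let f, g : (0,T) → ℝ be measurable. Define J(t) = √(2/t)·∫₀ᵗ |f(τ)||g(τ)| dτ for 0 < t < T. Then ‖√t·|ln(t/(eT))|^σ · J(t)‖_{L^q((0,T),dt/t)} ≤ C_{q,σ} · (sup_{0<τ<T} √τ |ln(τ/(eT))|^σ |f(τ)|) · ‖√τ·|ln(τ/(eT))|^σ·|g(τ)|‖_{L^q((0,T),dτ/τ)}. -/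
/-!
Put `c = eT` and `L(τ) = |log (τ / c)|`, so `L > 1` on `(0, T)`, and let `F, G` be the weighted
versions of `f, g`. Since `|f g| = F G L^{-2σ} / τ`, Hölder's inequality for `dτ/τ` on `(0, t)`
with exponents `∞, q, q'` bounds the weighted `J(t)` by
`√2 ‖F‖_∞ ‖G‖_q L(t)^σ ‖L^{-2σ}‖_{q'}`. The substitution `τ = c e^{-u}` turns
`∫₀ᵗ L^{-r} dτ/τ` into `∫_{L(t)}^∞ u^{-r} du = L(t)^{1-r} / (r - 1)`, so the weighted `J(t)` is
`O(L(t)^{-(σ - 1/q')})`, a function whose `L^q(dt/t)` norm is finite because `σ > 1`.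
-/

open MeasureTheory Set ENNReal

/-- The measure `dt/t` on `(0,T)`. -/
noncomputable def logMeasure (T : ℝ) : Measure ℝ :=
  (volume.restrict (Set.Ioo 0 T)).withDensity (fun t => ENNReal.ofReal t⁻¹)

open Real

lemma lintegral_logMeasure (t : ℝ) (φ : ℝ → ℝ≥0∞) :
    ∫⁻ τ, φ τ ∂logMeasure t = ∫⁻ τ in Ioo 0 t, ENNReal.ofReal τ⁻¹ * φ τ :=
  lintegral_withDensity_eq_lintegral_mul_non_measurable _ (by fun_prop)
    (.of_forall fun _ => ofReal_lt_top) φ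

lemma ae_logMeasure_mem (t : ℝ) : ∀ᵐ τ ∂logMeasure t, τ ∈ Ioo 0 t :=
  withDensity_absolutelyContinuous _ _ (ae_restrict_mem measurableSet_Ioo)

lemma logMeasure_eq_restrict {t T : ℝ} (h : t ≤ T) :
    logMeasure t = (logMeasure T).restrict (Ioo 0 t) := by
  rw [logMeasure, logMeasure, restrict_withDensity measurableSet_Ioo,
    Measure.restrict_restrict measurableSet_Ioo,
    inter_eq_self_of_subset_left (Ioo_subset_Ioo_right h)]

lemma logMeasure_mono : Monotone logMeasure := fun _ _ h =>
  (logMeasure_eq_restrict h).trans_le Measure.restrict_le_self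

lemma lintegral_logMeasure_enorm_mul_self (t : ℝ) (φ : ℝ → ℝ) :
    ∫⁻ τ, ‖τ * φ τ‖ₑ ∂logMeasure t = ∫⁻ τ in Ioo 0 t, ‖φ τ‖ₑ := by
  rw [lintegral_logMeasure]
  refine setLIntegral_congr_fun measurableSet_Ioo fun τ hτ => ?_
  rw [enorm_mul, Real.enorm_of_nonneg hτ.1.le, ← mul_assoc,
    ← ENNReal.ofReal_mul (inv_nonneg.2 hτ.1.le), inv_mul_cancel₀ hτ.1.ne', ENNReal.ofReal_one, one_mul]

lemma lintegral_logMeasure_eq_lintegral_Ioi {c t : ℝ} (hc : 0 < c) (ht : 0 < t)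
    (φ : ℝ → ℝ≥0∞) :
    ∫⁻ τ, φ τ ∂logMeasure t = ∫⁻ u in Ioi (log (c / t)), φ (c * exp (-u)) := by
  have himage : (fun u => c * exp (-u)) '' Ioi (log (c / t)) = Ioo 0 t := by
    have : (fun u => c * exp (-u)) = (c * ·) ∘ exp ∘ Neg.neg := rfl
    rw [this, image_comp, image_comp, image_neg_Ioi, image_exp_Iio, image_mul_left_Ioo hc,
      mul_zero, exp_neg, exp_log (div_pos hc ht), inv_div, mul_div_cancel₀ _ hc.ne']
  have hderiv : ∀ u ∈ Ioi (log (c / t)),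
      HasDerivWithinAt (fun u => c * exp (-u)) (-(c * exp (-u))) (Ioi (log (c / t))) u := by
    intro u _
    simpa using ((hasDerivAt_neg u).exp.const_mul c).hasDerivWithinAt
  have hinj : InjOn (fun u => c * exp (-u)) (Ioi (log (c / t))) := fun u _ v _ h => by
    simpa using mul_left_cancel₀ hc.ne' h
  rw [lintegral_logMeasure, ← himage,
    lintegral_image_eq_lintegral_abs_deriv_mul measurableSet_Ioi hderiv hinj]
  refine setLIntegral_congr_fun measurableSet_Ioi fun u _ => ?_
  have : 0 < c * exp (-u) := by positivity
  rw [abs_neg, abs_of_pos this, ← mul_assoc, ← ENNReal.ofReal_mul this.le,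
    mul_inv_cancel₀ this.ne', ENNReal.ofReal_one, one_mul]

lemma abs_log_div_eq {τ c : ℝ} (hτ : 0 < τ) (hτc : τ ≤ c) : |log (τ / c)| = log (c / τ) := by
  rw [abs_of_nonpos (log_nonpos (div_nonneg hτ.le (hτ.le.trans hτc))
    ((div_le_one (hτ.trans_le hτc)).2 hτc)), ← Real.log_inv, inv_div]

lemma abs_log_div_pos {τ c : ℝ} (hτ : 0 < τ) (hτc : τ < c) : 0 < |log (τ / c)| := by
  rw [abs_log_div_eq hτ hτc.le]
  exact log_pos ((one_lt_div hτ).2 hτc)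

lemma abs_log_div_le_abs_log_div {τ t c : ℝ} (hτ : 0 < τ) (hτt : τ ≤ t) (htc : t ≤ c) :
    |log (t / c)| ≤ |log (τ / c)| := by
  rw [abs_log_div_eq (hτ.trans_le hτt) htc, abs_log_div_eq hτ (hτt.trans htc)]
  exact log_le_log (div_pos (hτ.trans_le (hτt.trans htc)) (hτ.trans_le hτt))
    (div_le_div_of_nonneg_left (hτ.trans_le (hτt.trans htc)).le hτ hτt)

lemma lintegral_logMeasure_abs_log_rpow_neg {c t p : ℝ} (ht : 0 < t) (htc : t < c) (hp : 1 < p) :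
    ∫⁻ τ, ENNReal.ofReal (|log (τ / c)| ^ (-p)) ∂logMeasure t =
      ENNReal.ofReal (|log (t / c)| ^ (1 - p) / (p - 1)) := by
  have hc : 0 < c := ht.trans htc
  have hpos : 0 < log (c / t) := log_pos ((one_lt_div ht).2 htc)
  rw [lintegral_logMeasure_eq_lintegral_Ioi hc ht, abs_log_div_eq ht htc.le]
  have hint := integrableOn_Ioi_rpow_of_lt (by linarith : -p < -1) hpos
  calc ∫⁻ u in Ioi (log (c / t)), ENNReal.ofReal (|log (c * exp (-u) / c)| ^ (-p))
      = ∫⁻ u in Ioi (log (c / t)), ENNReal.ofReal (u ^ (-p)) := by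
        refine setLIntegral_congr_fun measurableSet_Ioi fun u hu => ?_
        rw [mul_div_cancel_left₀ _ hc.ne', log_exp, abs_neg, abs_of_pos (hpos.trans hu)]
    _ = ENNReal.ofReal (log (c / t) ^ (1 - p) / (p - 1)) := by
        rw [← ofReal_integral_eq_lintegral_ofReal hint
          ((ae_restrict_mem measurableSet_Ioi).mono fun u hu => rpow_nonneg (hpos.trans hu).le _),
          integral_Ioi_rpow_of_lt (by linarith) hpos]
        congr 1
        rw [show -p + 1 = 1 - p by ring, show (1 : ℝ) - p = -(p - 1) by ring, div_neg, neg_div,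
          neg_neg]

lemma eLpNorm_top_abs_log_rpow_neg_le {c t b : ℝ} (htc : t < c) (hb : 0 ≤ b) :
    eLpNorm (fun τ => |log (τ / c)| ^ (-b)) ∞ (logMeasure t) ≤
      ENNReal.ofReal (|log (t / c)| ^ (-b)) := by
  rw [eLpNorm_exponent_top]
  refine eLpNormEssSup_le_of_ae_enorm_bound ((ae_logMeasure_mem t).mono fun τ hτ => ?_)
  rw [Real.enorm_of_nonneg (by positivity)]
  exact ENNReal.ofReal_le_ofReal <| rpow_le_rpow_of_nonpos
    (abs_log_div_pos (hτ.1.trans hτ.2) htc) (abs_log_div_le_abs_log_div hτ.1 hτ.2.le htc.le) (by linarith)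

/-- Here `r⁻¹.toReal` stands for `1 / r`, which is `0` when `r = ∞`. -/
lemma exists_eLpNorm_abs_log_rpow_neg_le {b : ℝ} {r : ℝ≥0∞} (hb : r⁻¹.toReal < b) :
    ∃ C > 0, ∀ c t : ℝ, 0 < t → t < c →
      eLpNorm (fun τ => |log (τ / c)| ^ (-b)) r (logMeasure t) ≤
        ENNReal.ofReal (C * |log (t / c)| ^ (r⁻¹.toReal - b)) := by
  rcases eq_or_ne r 0 with rfl | hr0
  · exact ⟨1, one_pos, fun _ _ _ _ => by simp⟩
  rcases eq_or_ne r ∞ with rfl | hrtop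
  · refine ⟨1, one_pos, fun c t _ htc => ?_⟩
    simp only [inv_top, toReal_zero, zero_sub, one_mul] at hb ⊢
    exact eLpNorm_top_abs_log_rpow_neg_le htc hb.le
  rw [toReal_inv] at hb ⊢
  set p := r.toReal
  have hp : 0 < p := ENNReal.toReal_pos hr0 hrtop
  have hbp : 1 < b * p := by rwa [← div_lt_iff₀ hp, one_div]
  refine ⟨(b * p - 1)⁻¹ ^ p⁻¹, by positivity, fun c t ht htc => ?_⟩
  have hL := abs_log_div_pos ht htc
  rw [eLpNorm_eq_lintegral_rpow_enorm_toReal hr0 hrtop]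
  refine le_of_eq ?_
  calc (∫⁻ τ, ‖|log (τ / c)| ^ (-b)‖ₑ ^ p ∂logMeasure t) ^ (1 / p)
      = ENNReal.ofReal (|log (t / c)| ^ (1 - b * p) / (b * p - 1)) ^ (1 / p) := by
        rw [← lintegral_logMeasure_abs_log_rpow_neg ht htc hbp]
        congr 1
        refine lintegral_congr fun τ => ?_
        rw [Real.enorm_of_nonneg (by positivity), ofReal_rpow_of_nonneg (by positivity) hp.le,
          ← rpow_mul (abs_nonneg _), neg_mul]
    _ = ENNReal.ofReal ((b * p - 1)⁻¹ ^ p⁻¹ * |log (t / c)| ^ (p⁻¹ - b)) := by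
        rw [ofReal_rpow_of_nonneg (by positivity) (by positivity), div_eq_inv_mul,
          mul_rpow (by positivity) (by positivity), ← rpow_mul hL.le, one_div]
        congr 3
        field_simp

lemma enorm_setIntegral_abs_mul_abs_le {c t σ : ℝ} (htc : t ≤ c) {f g : ℝ → ℝ}
    (hg : Measurable g) {q q' : ℝ≥0∞} [q.HolderConjugate q'] :
    ‖∫ τ in Ioo 0 t, |f τ| * |g τ|‖ₑ ≤
      eLpNorm (fun τ => √τ * |log (τ / c)| ^ σ * f τ) ∞ (logMeasure t) *
        (eLpNorm (fun τ => √τ * |log (τ / c)| ^ σ * g τ) q (logMeasure t) *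
          eLpNorm (fun τ => |log (τ / c)| ^ (-(2 * σ))) q' (logMeasure t)) := by
  set F := fun τ => √τ * |log (τ / c)| ^ σ * f τ
  set G := fun τ => √τ * |log (τ / c)| ^ σ * g τ
  set W := fun τ => |log (τ / c)| ^ (-(2 * σ))
  have hW : Measurable W := by fun_prop
  have hweights : ∀ᵐ τ ∂logMeasure t, F τ * (G τ * W τ) = τ * (f τ * g τ) := by
    filter_upwards [ae_logMeasure_mem t] with τ hτ
    have hL := abs_log_div_pos hτ.1 (hτ.2.trans_le htc)
    have hLL : |log (τ / c)| ^ σ * |log (τ / c)| ^ σ * |log (τ / c)| ^ (-(2 * σ)) = 1 := by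
      rw [← rpow_add hL, ← rpow_add hL, show σ + σ + -(2 * σ) = 0 by ring, Real.rpow_zero]
    calc F τ * (G τ * W τ)
        = (√τ * √τ) * (|log (τ / c)| ^ σ * |log (τ / c)| ^ σ * |log (τ / c)| ^ (-(2 * σ))) *
            (f τ * g τ) := by ring
      _ = τ * (f τ * g τ) := by rw [mul_self_sqrt hτ.1.le, hLL, mul_one]
  calc ‖∫ τ in Ioo 0 t, |f τ| * |g τ|‖ₑ
      ≤ ∫⁻ τ in Ioo 0 t, ‖f τ * g τ‖ₑ := by
        refine (enorm_integral_le_lintegral_enorm _).trans_eq (lintegral_congr fun τ => ?_)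
        rw [← abs_mul, enorm_abs]
    _ = eLpNorm (F • (G • W)) 1 (logMeasure t) := by
        rw [eLpNorm_one_eq_lintegral_enorm, ← lintegral_logMeasure_enorm_mul_self]
        exact lintegral_congr_ae (hweights.mono fun τ h => by
          simp only [smul_eq_mul, Pi.mul_apply, h])
    _ ≤ eLpNorm F ∞ (logMeasure t) * eLpNorm (G • W) 1 (logMeasure t) :=
        eLpNorm_smul_le_eLpNorm_top_mul_eLpNorm _ (by fun_prop) F
    _ ≤ _ := by
        gcongr
        exact eLpNorm_smul_le_mul_eLpNorm hW.aestronglyMeasurable (by fun_prop)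

lemma enorm_weighted_integral_le {c t T σ C : ℝ} (ht : 0 < t) (htT : t ≤ T) (hTc : T < c)
    {f g : ℝ → ℝ} (hg : Measurable g) {q q' : ℝ≥0∞} [q.HolderConjugate q'] (hC : 0 ≤ C)
    (hW : eLpNorm (fun τ => |log (τ / c)| ^ (-(2 * σ))) q' (logMeasure t) ≤
      ENNReal.ofReal (C * |log (t / c)| ^ (q'⁻¹.toReal - 2 * σ))) :
    ‖√t * |log (t / c)| ^ σ * (√(2 / t) * ∫ τ in Ioo 0 t, |f τ| * |g τ|)‖ₑ ≤
      ENNReal.ofReal (√2 * C) *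
        eLpNorm (fun τ => √τ * |log (τ / c)| ^ σ * f τ) ∞ (logMeasure T) *
        eLpNorm (fun τ => √τ * |log (τ / c)| ^ σ * g τ) q (logMeasure T) *
        ‖|log (t / c)| ^ (-(σ - q'⁻¹.toReal))‖ₑ := by
  set L := |log (t / c)|
  have hL : 0 < L := abs_log_div_pos ht (htT.trans_lt hTc)
  have hsqrt : √t * √(2 / t) = √2 := by
    rw [← sqrt_mul ht.le, mul_div_cancel₀ _ ht.ne']
  have hexp : √2 * L ^ σ * (C * L ^ (q'⁻¹.toReal - 2 * σ)) =
      √2 * C * L ^ (-(σ - q'⁻¹.toReal)) := by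
    rw [show -(σ - q'⁻¹.toReal) = σ + (q'⁻¹.toReal - 2 * σ) by ring, rpow_add hL]
    ring
  rw [show √t * L ^ σ * (√(2 / t) * ∫ τ in Ioo 0 t, |f τ| * |g τ|) =
      √2 * L ^ σ * ∫ τ in Ioo 0 t, |f τ| * |g τ| by rw [← hsqrt]; ring,
    enorm_mul, Real.enorm_of_nonneg (by positivity)]
  calc _ ≤ ENNReal.ofReal (√2 * L ^ σ) *
        (eLpNorm (fun τ => √τ * |log (τ / c)| ^ σ * f τ) ∞ (logMeasure T) *
          (eLpNorm (fun τ => √τ * |log (τ / c)| ^ σ * g τ) q (logMeasure T) *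
            ENNReal.ofReal (C * L ^ (q'⁻¹.toReal - 2 * σ)))) := by
        gcongr
        refine (enorm_setIntegral_abs_mul_abs_le (σ := σ) (q := q) (q' := q')
          (htT.trans hTc.le) hg).trans ?_
        gcongr <;> exact logMeasure_mono htT
    _ = ENNReal.ofReal (√2 * L ^ σ * (C * L ^ (q'⁻¹.toReal - 2 * σ))) *
        eLpNorm (fun τ => √τ * |log (τ / c)| ^ σ * f τ) ∞ (logMeasure T) *
        eLpNorm (fun τ => √τ * |log (τ / c)| ^ σ * g τ) q (logMeasure T) := by
        rw [ENNReal.ofReal_mul (by positivity : 0 ≤ √2 * L ^ σ)]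
        ring
    _ = _ := by
        rw [hexp, ENNReal.ofReal_mul (by positivity : 0 ≤ √2 * C),
          Real.enorm_of_nonneg (by positivity)]
        ring

theorem stmt_13 (σ : ℝ) (hσ : 1 < σ) (q : ℝ≥0∞) (hq : 1 ≤ q) :
    ∃ C : ℝ, 0 < C ∧ ∀ T : ℝ, 0 < T → ∀ f g : ℝ → ℝ, Measurable f → Measurable g →
      eLpNorm (fun t => Real.sqrt t * |Real.log (t / (Real.exp 1 * T))| ^ σ *
          (Real.sqrt (2 / t) * ∫ τ in Ioo 0 t, |f τ| * |g τ|)) q (logMeasure T)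
        ≤ ENNReal.ofReal C *
            eLpNorm (fun τ => Real.sqrt τ * |Real.log (τ / (Real.exp 1 * T))| ^ σ * f τ)
              ⊤ (logMeasure T) *
            eLpNorm (fun τ => Real.sqrt τ * |Real.log (τ / (Real.exp 1 * T))| ^ σ * g τ)
              q (logMeasure T) := by
  set q' := (1 - q⁻¹)⁻¹
  have : q.HolderConjugate q' := .inv_one_sub_inv' hq
  have hq' : q'⁻¹.toReal = 1 - q⁻¹.toReal := by
    rw [inv_inv, toReal_sub_of_le (ENNReal.inv_le_one.2 hq) one_ne_top, toReal_one]
  obtain ⟨C₁, hC₁, hW₁⟩ := exists_eLpNorm_abs_log_rpow_neg_le (b := 2 * σ) (r := q')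
    (by rw [hq']; linarith [toReal_nonneg (a := q⁻¹)])
  obtain ⟨C₂, hC₂, hW₂⟩ := exists_eLpNorm_abs_log_rpow_neg_le (b := σ - q'⁻¹.toReal) (r := q)
    (by rw [hq']; linarith)
  refine ⟨√2 * C₁ * C₂, by positivity, fun T hT f g _ hg => ?_⟩
  have hTc : T < exp 1 * T := lt_mul_left hT (Real.one_lt_exp_iff.2 one_pos)
  have hlogT : |log (T / (exp 1 * T))| = 1 := by
    rw [div_mul_cancel_right₀ hT.ne', Real.log_inv, log_exp, abs_neg, abs_one]
  calc _ ≤ ENNReal.ofReal (√2 * C₁) *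
        eLpNorm (fun τ => √τ * |log (τ / (exp 1 * T))| ^ σ * f τ) ∞ (logMeasure T) *
        eLpNorm (fun τ => √τ * |log (τ / (exp 1 * T))| ^ σ * g τ) q (logMeasure T) *
        eLpNorm (fun t : ℝ => |log (t / (exp 1 * T))| ^ (-(σ - q'⁻¹.toReal))) q (logMeasure T) :=
        eLpNorm_le_mul_eLpNorm_of_ae_le_mul'' _
          ((Measurable.pow_const (by fun_prop) _).aestronglyMeasurable) <|
          (ae_logMeasure_mem T).mono fun t ht => enorm_weighted_integral_le ht.1 ht.2.le hTc hg
            hC₁.le (hW₁ _ t ht.1 (ht.2.trans hTc))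
    _ ≤ _ * ENNReal.ofReal C₂ := by
        gcongr
        simpa only [hlogT, Real.one_rpow, mul_one] using hW₂ _ T hT hTc
    _ = _ := by
        rw [ENNReal.ofReal_mul (by positivity : 0 ≤ √2 * C₁)]
        ring
end
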